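/- arXiv:1911.08520 — 2 statements merged into one kernel-verified Lean document; each statement's English description precedes it below -/
import Mathlib

section
/- Let E_k denote the maximal expected additional utility of a cheating customer in a k-round escrow, satisfying the recursion E_k = max over y ∈ {0,...,Y} of (1-q(y))·(G·(Σ duplicated gains) - B) + q(y)·(g(y) + E_{k-1}) with E_0 = 0, where q(y) is the probability no duplicated ticket wins. If the penalty B satisfies B > G·(y*/(1-q(y*)) + (d-1)·Y + r·τ) for the maximizing y*, then E_k ≤ 0 for all k ≥ 0, by induction on k. -/
/-- Penalty-bound induction (exact-win-rate scheme).  `E k` is the maximal expected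
additional utility of a cheating customer over a `k`-round escrow, satisfying
`E 0 = 0` and
`E (k+1) = max_{y ∈ {0,…,Y}} (1 - q y)·(G·(y + (d-1)·Y + r·τ) - B) + q y·(G·y + E k)`,
where `q y` is the probability no duplicated ticket wins (so `q 0 = 1`),
`G = (m-1)·p·β ≥ 0` the per-ticket cheating gain.  If
`B > G·(y/(1-q y) + (d-1)·Y + r·τ)` for every admissible `y ≥ 1`, then `E k ≤ 0`
for all `k`. -/
theorem penalty_bound_induction
    (Y d r τ : ℕ) (G B : ℝ) (q : ℕ → ℝ) (E : ℕ → ℝ)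
    (hG : 0 ≤ G)
    (hq0 : q 0 = 1)
    (hq : ∀ y, y ∈ Finset.Icc 0 Y → 0 ≤ q y ∧ q y ≤ 1)
    (hq1 : ∀ y, y ∈ Finset.Icc 1 Y → q y < 1)
    (hE0 : E 0 = 0)
    (hErec : ∀ k, E (k + 1) =
      (Finset.Icc 0 Y).sup' ⟨0, Finset.mem_Icc.mpr ⟨Nat.zero_le 0, Nat.zero_le Y⟩⟩
        (fun y => (1 - q y) * (G * ((y : ℝ) + ((d : ℝ) - 1) * (Y : ℝ) + (r : ℝ) * (τ : ℝ)) - B)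
          + q y * (G * (y : ℝ) + E k)))
    (hB : ∀ y, y ∈ Finset.Icc 1 Y →
      B > G * ((y : ℝ) / (1 - q y) + ((d : ℝ) - 1) * (Y : ℝ) + (r : ℝ) * (τ : ℝ))) :
    ∀ k, E k ≤ 0 := by
  intro k
  induction k with
  | zero => simp [hE0]
  | succ k ih =>
    rw [hErec k]
    apply Finset.sup'_le
    intro y hy
    rcases Nat.eq_zero_or_pos y with h0 | h1
    · subst h0
      simp [hq0]
      linarith [ih]
    · have hy1 : y ∈ Finset.Icc 1 Y := by
        simp only [Finset.mem_Icc] at hy ⊢; exact ⟨h1, hy.2⟩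
      have hqlt : q y < 1 := hq1 y hy1
      have hqnn : 0 ≤ q y := (hq y hy).1
      have hpos : 0 < 1 - q y := by linarith
      have hBy := hB y hy1
      have key : G * ((y : ℝ) / (1 - q y)) * (1 - q y) = G * y := by
        field_simp
      nlinarith [mul_le_mul_of_nonneg_left ih hqnn,
        mul_lt_mul_of_pos_right hBy hpos]
end

section
/- Let E_υ satisfy the recursion E_υ = (1-(1-p)^{y})·(G·(w·y_max + xκ) - B) + (1-p)^{y}·(G·y + E_{υ-1}) maximized over y ∈ {1,...,κ}, with E_0 = 0 and G = (m-1)pβ > 0. If B > (m-1)pβκ·(1/(1-(1-p)^κ) + w + x - 1), then E_υ ≤ 0 for all υ, assuming the maximizing choice is y = κ in every round. -/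
/-- Independent-win penalty analysis: with `κ ≥ 1` tickets per round, win
probability `p ∈ (0,1)`, ticket value `β > 0`, `m ≥ 2` merchants,
`G = (m-1)·p·β`, draw delay `w` and redemption period `x`, and per-round
duplication fixed at its maximizing value `y = κ`, the expected cheating utility
satisfies `E 0 = 0` and
`E (υ+1) = (1-(1-p)^κ)·(G·(w·κ + x·κ) - B) + (1-p)^κ·(G·κ + E υ)`.
If `B > (m-1)·p·β·κ·(1/(1-(1-p)^κ) + w + x - 1)` then `E υ ≤ 0` for all `υ`. -/
theorem indep_penalty_bound (κ w x m : ℕ) (p β B : ℝ) (E : ℕ → ℝ)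
    (hκ : 1 ≤ κ) (hm : 2 ≤ m) (hp0 : 0 < p) (hp1 : p < 1) (hβ : 0 < β)
    (hE0 : E 0 = 0)
    (hErec : ∀ υ, E (υ + 1) =
      (1 - (1 - p) ^ κ) *
          (((m : ℝ) - 1) * p * β * ((w : ℝ) * (κ : ℝ) + (x : ℝ) * (κ : ℝ)) - B)
        + (1 - p) ^ κ * (((m : ℝ) - 1) * p * β * (κ : ℝ) + E υ))
    (hB : B > ((m : ℝ) - 1) * p * β * (κ : ℝ) *
      (1 / (1 - (1 - p) ^ κ) + (w : ℝ) + (x : ℝ) - 1)) :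
    ∀ υ, E υ ≤ 0 := by
  set q : ℝ := (1 - p) ^ κ with hq
  have hq0 : 0 ≤ q := pow_nonneg (by linarith) κ
  have hq1 : q < 1 :=
    pow_lt_one₀ (by linarith) (by linarith) (by omega)
  have h1q : 0 < 1 - q := by linarith
  have hm1 : (1 : ℝ) ≤ (m : ℝ) - 1 := by
    have : (2 : ℝ) ≤ (m : ℝ) := by exact_mod_cast hm
    linarith
  have hκ1 : (1 : ℝ) ≤ (κ : ℝ) := by exact_mod_cast hκ
  have hG : 0 < ((m : ℝ) - 1) * p * β * (κ : ℝ) := by positivity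
  -- key: (1-q) * B > Gκ((w+x)(1-q) + q)
  have hkey : ((m : ℝ) - 1) * p * β * (κ : ℝ) *
      (((w : ℝ) + (x : ℝ)) * (1 - q) + q) < (1 - q) * B := by
    have := mul_lt_mul_of_pos_left hB h1q
    have hdiv : (1 - q) * (1 / (1 - q)) = 1 := by
      field_simp
    nlinarith [this, hdiv]
  intro υ
  induction υ with
  | zero => simp [hE0]
  | succ n ih =>
    rw [hErec n]
    have hqE : q * E n ≤ 0 := mul_nonpos_of_nonneg_of_nonpos hq0 ih
    nlinarith [hkey, hqE]
end
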